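/- arXiv:0912.3820 — 2 statements merged into one kernel-verified Lean document; each statement's English description precedes it below -/
import Mathlib

section
/- Let λ, μ be partitions of n with λ ≤ μ in dominance order, and suppose ∑_{j=1}^m λ_j = ∑_{j=1}^m μ_j for some m ≥ 1. Then ∑_{j=1}^{μ_m} λ*_j = ∑_{j=1}^{μ_m} μ*_j. -/
open Finset

/-- Partial sum `∑_{j=1}^i f j` (one-indexed). -/
def psum (f : ℕ → ℕ) (i : ℕ) : ℕ := ∑ j ∈ Finset.Icc 1 i, f j

/-- Conjugate partition: `conj f j = #{k ≥ 1 : f k ≥ j}`. -/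
noncomputable def conj (f : ℕ → ℕ) (j : ℕ) : ℕ := Set.ncard {k : ℕ | 1 ≤ k ∧ j ≤ f k}

/-- `f` is a partition of `n` (one-indexed, weakly decreasing, eventually zero). -/
def IsPartitionOf (f : ℕ → ℕ) (n : ℕ) : Prop :=
  (∀ i, 1 ≤ i → f (i + 1) ≤ f i) ∧ ∃ N, (∀ i, N < i → f i = 0) ∧ psum f N = n

/-- Weakly decreasing (from index 1 on). -/
def Decr (f : ℕ → ℕ) : Prop := ∀ i, 1 ≤ i → f (i + 1) ≤ f i

/-- `A_i = ∑_{j ≤ i} (α_j + β_j)`. -/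
def AA (f g : ℕ → ℕ) (i : ℕ) : ℕ := ∑ j ∈ Finset.Icc 1 i, (f j + g j)

/-- `B_i = ∑_{j < i} (α_j + β_j) + α_i`. -/
def BB (f g : ℕ → ℕ) (i : ℕ) : ℕ := (∑ j ∈ Finset.Icc 1 (i - 1), (f j + g j)) + f i

/-- Multiplicity of `i` as a part. -/
noncomputable def mult (f : ℕ → ℕ) (i : ℕ) : ℕ := conj f i - conj f (i + 1)

/-!
Since `∑_{j ≤ t} λ*_j = ∑_k min(λ_k, t)`, the claim says that the excesses
`E_λ(t) = ∑_k (λ_k - t)₊` and `E_μ(t)` agree at `t = μ_m`. For a weakly decreasing sequence,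
`E(t) = max_r (∑_{k ≤ r} λ_k - r t)`, the maximum being attained where the parts cross `t`.
Dominance gives `E_λ(t) ≤ E_μ(t)`; for `μ` the maximum is attained at `r = m`, where the two partial
sums agree, so `E_μ(t) ≤ E_λ(t)`.
-/

lemma Decr.antitoneOn {f : ℕ → ℕ} (hf : Decr f) : AntitoneOn f (Set.Ici 1) :=
  antitoneOn_nat_Ici_of_succ_le hf

lemma Decr.exists_threshold {f : ℕ → ℕ} (hf : Decr f) (t N : ℕ) :
    ∃ r ≤ N, (∀ k ∈ Icc 1 r, t ≤ f k) ∧ ∀ k ∈ Ioc r N, f k ≤ t := by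
  refine ⟨Nat.findGreatest (fun i => t < f i) N, Nat.findGreatest_le N, ?_, ?_⟩
  · intro k hk
    rw [mem_Icc] at hk
    have hr : t < f (Nat.findGreatest (fun i => t < f i) N) :=
      Nat.findGreatest_of_ne_zero (P := fun i => t < f i) rfl (by omega)
    exact hr.le.trans (hf.antitoneOn hk.1 (Set.mem_Ici.2 (hk.1.trans hk.2)) hk.2)
  · intro k hk
    rw [mem_Ioc] at hk
    exact not_lt.1 (Nat.findGreatest_is_greatest (P := fun i => t < f i) hk.1 hk.2)

lemma psum_mono (f : ℕ → ℕ) : Monotone (psum f) := fun _ _ h =>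
  sum_le_sum_of_subset (Icc_subset_Icc_right h)

lemma psum_eq_of_forall_eq_zero {f : ℕ → ℕ} {N M : ℕ} (hNM : N ≤ M)
    (hf : ∀ k ∈ Ioc N M, f k = 0) : psum f M = psum f N := by
  refine (sum_subset (Icc_subset_Icc_right hNM) fun k hk hk' => hf k ?_).symm
  simp only [mem_Icc, mem_Ioc] at hk hk' ⊢
  omega

lemma conj_eq_card_filter {f : ℕ → ℕ} {N : ℕ} (hN : ∀ k, N < k → f k = 0) {j : ℕ}
    (hj : 1 ≤ j) : conj f j = #{k ∈ Icc 1 N | j ≤ f k} := by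
  rw [conj, ← Set.ncard_coe_finset]
  congr 1
  ext k
  simp only [Set.mem_ofPred_eq, coe_filter, mem_Icc]
  have := hN k
  constructor
  · rintro ⟨h1, h2⟩
    exact ⟨⟨h1, by omega⟩, h2⟩
  · rintro ⟨⟨h1, _⟩, h2⟩
    exact ⟨h1, h2⟩

lemma psum_conj_eq_psum_min {f : ℕ → ℕ} {N : ℕ} (hN : ∀ k, N < k → f k = 0) (t : ℕ) :
    psum (conj f) t = psum (fun k => min (f k) t) N := by
  have hconj : ∀ j ∈ Icc 1 t, conj f j = ∑ k ∈ Icc 1 N, if j ≤ f k then 1 else 0 :=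
    fun j hj => by rw [conj_eq_card_filter hN (mem_Icc.1 hj).1, card_filter]
  rw [psum, sum_congr rfl hconj, sum_comm]
  refine sum_congr rfl fun k _ => ?_
  rw [← card_filter, show {j ∈ Icc 1 t | j ≤ f k} = Icc 1 (min (f k) t) by ext; simp only [mem_filter, mem_Icc]; omega,
    Nat.card_Icc, Nat.add_sub_cancel]

lemma psum_conj_add_psum_tsub {f : ℕ → ℕ} {N : ℕ} (hN : ∀ k, N < k → f k = 0) (t : ℕ) :
    psum (conj f) t + psum (fun k => f k - t) N = psum f N := by
  rw [psum_conj_eq_psum_min hN, psum, psum, psum, ← sum_add_distrib]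
  exact sum_congr rfl fun k _ => by omega

lemma IsPartitionOf.psum_conj_add_psum_tsub {f : ℕ → ℕ} {n N : ℕ} (hf : IsPartitionOf f n)
    (hN : ∀ k, N < k → f k = 0) (t : ℕ) :
    psum (conj f) t + psum (fun k => f k - t) N = n := by
  obtain ⟨-, N', hN', hsum⟩ := hf
  rw [_root_.psum_conj_add_psum_tsub hN, ← hsum,
    ← psum_eq_of_forall_eq_zero (M := N + N') (by omega) fun k hk => hN k (mem_Ioc.1 hk).1,
    psum_eq_of_forall_eq_zero (by omega) fun k hk => hN' k (mem_Ioc.1 hk).1]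

lemma psum_const (c r : ℕ) : psum (fun _ => c) r = r * c := by
  simp [psum]

lemma psum_le_psum_tsub_add_mul (f : ℕ → ℕ) {r N : ℕ} (hr : r ≤ N) (t : ℕ) :
    psum f r ≤ psum (fun k => f k - t) N + r * t :=
  calc psum f r ≤ psum (fun k => f k - t) r + psum (fun _ => t) r := by
        rw [psum, psum, psum, ← sum_add_distrib]
        exact sum_le_sum fun k _ => by omega
    _ ≤ psum (fun k => f k - t) N + r * t := by
        rw [psum_const]
        exact Nat.add_le_add_right (psum_mono _ hr) _

lemma psum_tsub_add_mul_eq {f : ℕ → ℕ} {r N t : ℕ} (hr : r ≤ N)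
    (hge : ∀ k ∈ Icc 1 r, t ≤ f k) (hle : ∀ k ∈ Ioc r N, f k ≤ t) :
    psum (fun k => f k - t) N + r * t = psum f r := by
  rw [psum_eq_of_forall_eq_zero hr fun k hk => Nat.sub_eq_zero_of_le (hle k hk), ← psum_const,
    psum, psum, psum, ← sum_add_distrib]
  exact sum_congr rfl fun k hk => Nat.sub_add_cancel (hge k hk)

theorem stmt4 (n : ℕ) (l m : ℕ → ℕ) (hl : IsPartitionOf l n) (hm : IsPartitionOf m n)
    (hdom : ∀ i, 1 ≤ i → psum l i ≤ psum m i)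
    (m₀ : ℕ) (hm₀ : 1 ≤ m₀) (heq : psum l m₀ = psum m m₀) :
    psum (conj l) (m m₀) = psum (conj m) (m m₀) := by
  obtain ⟨Nl, hl_zero, -⟩ := hl.2
  obtain ⟨Nm, hm_zero, -⟩ := hm.2
  set t := m m₀
  set N := Nl + Nm + m₀
  have hl_total := hl.psum_conj_add_psum_tsub (N := N) (fun k hk => hl_zero k (by omega)) t
  have hm_total := hm.psum_conj_add_psum_tsub (N := N) (fun k hk => hm_zero k (by omega)) t
  set El := psum (fun k => l k - t) N
  set Em := psum (fun k => m k - t) N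
  have hm_excess : Em + m₀ * t = psum m m₀ := by
    refine psum_tsub_add_mul_eq (by omega) (fun k hk => ?_) (fun k hk => ?_)
    · obtain ⟨hk1, hkm⟩ := mem_Icc.1 hk
      exact Decr.antitoneOn hm.1 hk1 hm₀ hkm
    · obtain ⟨hmk, -⟩ := mem_Ioc.1 hk
      exact Decr.antitoneOn hm.1 hm₀ (Set.mem_Ici.2 (by omega)) hmk.le
  obtain ⟨r, hrN, hr_ge, hr_le⟩ := Decr.exists_threshold hl.1 t N
  have hl_excess : El + r * t = psum l r := psum_tsub_add_mul_eq hrN hr_ge hr_le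
  have hEm_le : Em ≤ El := by
    have := psum_le_psum_tsub_add_mul l (show m₀ ≤ N by omega) t
    omega
  have hEl_le : El ≤ Em := by
    have hdom_r : psum l r ≤ psum m r := by
      rcases Nat.eq_zero_or_pos r with rfl | hr
      · simp [psum]
      · exact hdom r hr
    have := psum_le_psum_tsub_add_mul m hrN t
    omega
  omega
end

section
/- Let (α,β) ∈ Λ²_{D_n} and (α̃, β̃) = Φ(α,β) (type D version). Then B_i = B̃_i for all i, A_i ≤ Ã_i for all i, and A_i < Ã_i if and only if β_i < α_{i+1} − 2; consequently (α,β) ≤ (α̃, β̃). Moreover, for any (α̃', β̃') ∈ Λ¹_{D_n} with (α,β) ≤ (α̃', β̃'), one has (α̃, β̃) ≤ (α̃', β̃'). -/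
open Finset

lemma AA_eq_BB (f g : ℕ → ℕ) (i : ℕ) (hi : 1 ≤ i) : AA f g i = BB f g i + g i := by
  obtain ⟨k, rfl⟩ : ∃ k, i = k + 1 := ⟨i - 1, by omega⟩
  simp only [AA, BB, Nat.add_sub_cancel]
  rw [Finset.sum_Icc_succ_top (by omega)]
  ring

lemma BB_succ (f g : ℕ → ℕ) (i : ℕ) : BB f g (i + 1) = AA f g i + f (i + 1) := by
  simp [AA, BB]

lemma BB_one (f g : ℕ → ℕ) : BB f g 1 = f 1 := by
  simp [BB]

/-- order properties and minimality of `Φ` for type `D_n`. -/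
theorem stmt15 (α β α' β' : ℕ → ℕ)
    (hα : Decr α) (hβ : Decr β)
    (hL2 : ∀ i, 1 ≤ i → α (i + 1) ≤ β i + 4 ∧ β i ≤ α i)
    (ha1 : α' 1 = α 1)
    (ha : ∀ i, 2 ≤ i → α' i = if β (i - 1) + 2 < α i then (α i + β (i - 1) + 2) / 2 else α i)
    (hb : ∀ i, 1 ≤ i → β' i = if β i + 2 < α (i + 1) then (α (i + 1) + β i - 1) / 2 else β i) :
    (∀ i, 1 ≤ i → BB α β i = BB α' β' i ∧ AA α β i ≤ AA α' β' i ∧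
      (AA α β i < AA α' β' i ↔ β i + 2 < α (i + 1))) ∧
    (∀ α'' β'' : ℕ → ℕ, Decr α'' → Decr β'' →
      (∀ i, 1 ≤ i → α'' (i + 1) ≤ β'' i + 2 ∧ β'' i ≤ α'' i) →
      (∀ i, 1 ≤ i → AA α β i ≤ AA α'' β'' i ∧ BB α β i ≤ BB α'' β'' i) →
      ∀ i, 1 ≤ i → AA α' β' i ≤ AA α'' β'' i ∧ BB α' β' i ≤ BB α'' β'' i) := by
  -- key fact: pairwise sums are preserved
  have hsum : ∀ i, 1 ≤ i → β i + α (i + 1) = β' i + α' (i + 1) := by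
    intro i hi
    have h1 := hb i hi
    have h2 := ha (i + 1) (by omega)
    simp only [Nat.add_sub_cancel] at h2
    by_cases hc : β i + 2 < α (i + 1)
    · rw [if_pos hc] at h1 h2; omega
    · rw [if_neg hc] at h1 h2; omega
  -- β' i vs β i
  have hbeta : ∀ i, 1 ≤ i → β i ≤ β' i ∧ (β i < β' i ↔ β i + 2 < α (i + 1)) := by
    intro i hi
    have h1 := hb i hi
    by_cases hc : β i + 2 < α (i + 1)
    · rw [if_pos hc] at h1
      constructor
      · omega
      · constructor <;> intro _ <;> omega
    · rw [if_neg hc] at h1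
      constructor
      · omega
      · constructor <;> intro h <;> omega
  -- BB equality by induction
  have hBB : ∀ i, 1 ≤ i → BB α β i = BB α' β' i := by
    intro i hi
    induction i with
    | zero => omega
    | succ k ih =>
      rcases Nat.eq_or_lt_of_le hi with h | h
      · rw [← h]
        simp only [BB_one]
        omega
      · have hk : 1 ≤ k := by omega
        have := ih hk
        rw [BB_succ, BB_succ, AA_eq_BB _ _ _ hk, AA_eq_BB _ _ _ hk]
        have := hsum k hk
        omega
  have part1 : ∀ i, 1 ≤ i → BB α β i = BB α' β' i ∧ AA α β i ≤ AA α' β' i ∧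
      (AA α β i < AA α' β' i ↔ β i + 2 < α (i + 1)) := by
    intro i hi
    have hB := hBB i hi
    have h1 := AA_eq_BB α β i hi
    have h2 := AA_eq_BB α' β' i hi
    have h3 := hbeta i hi
    refine ⟨hB, by omega, ?_⟩
    rw [← h3.2]
    omega
  refine ⟨part1, ?_⟩
  intro α'' β'' hα'' hβ'' hL1 hle i hi
  have hB : BB α' β' i ≤ BB α'' β'' i := by
    rw [← hBB i hi]; exact (hle i hi).2
  refine ⟨?_, hB⟩
  by_cases hc : β i + 2 < α (i + 1)
  · have h1 : BB α β (i + 1) ≤ BB α'' β'' (i + 1) := (hle (i + 1) (by omega)).2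
    rw [BB_succ, BB_succ] at h1
    have h2 : α'' (i + 1) ≤ β'' i + 2 := (hL1 i hi).1
    have h3 := AA_eq_BB α'' β'' i hi
    have h4 := AA_eq_BB α β i hi
    have h5 := AA_eq_BB α' β' i hi
    have h6 : BB α β i ≤ BB α'' β'' i := (hle i hi).2
    have h7 := hb i hi
    rw [if_pos hc] at h7
    have hBeq := hBB i hi
    omega
  · have h7 := hb i hi
    rw [if_neg hc] at h7
    have h4 := AA_eq_BB α β i hi
    have h5 := AA_eq_BB α' β' i hi
    have hBeq := hBB i hi
    have := (hle i hi).1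
    omega
end
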